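/- arXiv:1408.0447 — 2 statements merged into one kernel-verified Lean document; each statement's English description precedes it below -/
import Mathlib

section
/- Let δ > 0 and let r, t > 0 satisfy r − t ≥ δt. Then for every λ with r − t ≤ λ ≤ r + t, the quantity Θ(λ, r, t) = (λ² + r² − t²)/(2rλ) satisfies Θ(λ, r, t) ≥ δ/(δ+2). -/
/-- for `r - t ≥ δt` and `r - t ≤ λ ≤ r + t`, the quantity
`Θ(λ,r,t) = (λ² + r² - t²)/(2rλ)` is at least `δ/(δ+2)`. -/
theorem stmt_13 (δ r t : ℝ) (hδ : 0 < δ) (hr : 0 < r) (ht : 0 < t)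
    (hrt : δ * t ≤ r - t) :
    ∀ lam : ℝ, r - t ≤ lam → lam ≤ r + t →
      δ / (δ + 2) ≤ (lam ^ 2 + r ^ 2 - t ^ 2) / (2 * r * lam) := by
  intro lam h1 h2
  have hlam : 0 < lam := by nlinarith
  rw [div_le_div_iff₀ (by linarith) (by positivity)]
  nlinarith [sq_nonneg ((δ+2)*lam - δ*r), sq_nonneg (r - (1+δ)*t),
    mul_pos hδ (mul_pos ht ht), mul_nonneg hδ.le (sq_nonneg (r - (1+δ)*t)),
    mul_nonneg (mul_nonneg hδ.le ht.le) (sub_nonneg.2 hrt)]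
end

section
/- Let m ≥ 2 be an integer, let ζ ∈ (0,1] be a constant such that 1/2 ≤ T_{m−1}(z) ≤ 1 and 0 < T'_{m−1}(z) ≤ (m−1)² for all z with 1/(1+ζ) ≤ z ≤ 1, and set E_m = m + 1/8 + 5ζ(m−1)²/3. Let R > 0, let w ∈ C¹((0,∞)) with w(y) > 0 for all y ≥ R, and suppose r, t > 0 satisfy r − t ≥ max{R, (2/ζ)t}. Then for all ξ, η ∈ [0,1], writing λ = r + tη − 2tηξ, K(r,t,η,ξ) = λ^m/(√(r + tη − tηξ)·√(r − ξtη)), and Θ̃(r,t,η,ξ) = (λ² + r² − t²η²)/(2rλ), the partial derivative in t satisfies: ∂/∂t [ K(r,t,η,ξ)·w(λ)·T_{m−1}(Θ̃(r,t,η,ξ)) ] ≥ −{ E_m·w(λ)/λ + |w'(λ)| }·K(r,t,η,ξ). -/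
/-! With `F = K · w(λ) · T_{m-1}(Θ̃)`, the product rule gives
`F' = K · (w(λ) (log K)' T + w'(λ) λ' T + w(λ) T'(Θ̃) Θ̃')` with `λ' = η(1 - 2ξ)`, `|λ'| ≤ 1`.
Since `Θ̃ = 1 - 2(tη)²ξ(1-ξ)/(rλ)` and `r - t ≥ 2t/ζ`, `Θ̃` stays in `[1/(1+ζ), 1]`, where the
hypotheses control `T` and `T'`. Writing `U = r + tη - tηξ`, `V = r - ξtη`, the two square roots
combine into `(log K)' = λ' (m/λ - r/(2UV)) + tη²ξ(1-ξ)/(UV)` with `0 ≤ m/λ - r/(2UV) ≤ m/λ`,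
so `(log K)' T ≥ -m/λ`; and `Θ̃' ≥ -ζ/λ`. Hence `F'/K ≥ -(m + ζ(m-1)²) w(λ)/λ - |w'(λ)|`. -/

open Set

/-- Evaluation of the Chebyshev polynomial of the first kind. -/
noncomputable def chebT (k : ℤ) (z : ℝ) : ℝ := (Polynomial.Chebyshev.T ℝ k).eval z

/-- Evaluation of the derivative of the Chebyshev polynomial of the first kind. -/
noncomputable def chebT' (k : ℤ) (z : ℝ) : ℝ :=
  (Polynomial.derivative (Polynomial.Chebyshev.T ℝ k)).eval z

/-- `λ = r + tη - 2tηξ`. -/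
noncomputable def lamf (r t η ξ : ℝ) : ℝ := r + t * η - 2 * t * η * ξ

/-- The kernel `K(r,t,η,ξ) = λ^m / (√(r+tη-tηξ)·√(r-ξtη))`. -/
noncomputable def Kf (m : ℕ) (r t η ξ : ℝ) : ℝ :=
  (lamf r t η ξ) ^ m / (Real.sqrt (r + t * η - t * η * ξ) * Real.sqrt (r - ξ * (t * η)))

/-- `Θ̃(r,t,η,ξ) = (λ² + r² - t²η²)/(2rλ)`. -/
noncomputable def Thetaf (r t η ξ : ℝ) : ℝ :=
  ((lamf r t η ξ) ^ 2 + r ^ 2 - t ^ 2 * η ^ 2) / (2 * r * lamf r t η ξ)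

noncomputable def logDerivKf (m : ℕ) (r t η ξ : ℝ) : ℝ :=
  m * (η * (1 - 2 * ξ)) / lamf r t η ξ - η * (1 - ξ) / (2 * (r + t * η - t * η * ξ))
    + ξ * η / (2 * (r - ξ * (t * η)))

noncomputable def derivThetaf (r t η ξ : ℝ) : ℝ :=
  -(2 * t * η ^ 2 * ξ * (1 - ξ) * (lamf r t η ξ + r)) / (r * lamf r t η ξ ^ 2)

theorem HasDerivAt.chebT {f : ℝ → ℝ} {f' x : ℝ} (k : ℤ) (hf : HasDerivAt f f' x) :
    HasDerivAt (fun y => chebT k (f y)) (chebT' k (f x) * f') x :=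
  ((Polynomial.Chebyshev.T ℝ k).hasDerivAt (f x)).comp x hf

section Derivatives

variable (r t η ξ : ℝ)

theorem hasDerivAt_const_add_mul (a c : ℝ) : HasDerivAt (fun t => a + t * c) c t :=
  (hasDerivAt_mul_const c).const_add a

theorem hasDerivAt_lamf : HasDerivAt (fun t => lamf r t η ξ) (η * (1 - 2 * ξ)) t := by
  have h : (fun t => lamf r t η ξ) = fun t => r + t * (η * (1 - 2 * ξ)) := by
    funext t; simp only [lamf]; ring
  exact h ▸ hasDerivAt_const_add_mul t r _

theorem hasDerivAt_Kf (m : ℕ) (hL : lamf r t η ξ ≠ 0) (hU : 0 < r + t * η - t * η * ξ)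
    (hV : 0 < r - ξ * (t * η)) :
    HasDerivAt (fun t => Kf m r t η ξ) (Kf m r t η ξ * logDerivKf m r t η ξ) t := by
  have hU' : HasDerivAt (fun t => r + t * η - t * η * ξ) (η * (1 - ξ)) t := by
    have h : (fun t => r + t * η - t * η * ξ) = fun t => r + t * (η * (1 - ξ)) := by
      funext t; ring
    exact h ▸ hasDerivAt_const_add_mul t r _
  have hV' : HasDerivAt (fun t => r - ξ * (t * η)) (-(ξ * η)) t := by
    have h : (fun t => r - ξ * (t * η)) = fun t => r + t * (-(ξ * η)) := by
      funext t; ring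
    exact h ▸ hasDerivAt_const_add_mul t r _
  have hden := ((Real.hasDerivAt_sqrt hU.ne').comp t hU').mul
    ((Real.hasDerivAt_sqrt hV.ne').comp t hV')
  have hs := Real.sqrt_pos.mpr hU
  have hq := Real.sqrt_pos.mpr hV
  refine (((hasDerivAt_lamf r t η ξ).pow m).div hden (mul_pos hs hq).ne').congr_deriv ?_
  simp only [Kf, logDerivKf, Function.comp_apply, Pi.mul_apply, Pi.pow_apply]
  have hs2 := Real.sq_sqrt hU.le
  have hq2 := Real.sq_sqrt hV.le
  set s := Real.sqrt (r + t * η - t * η * ξ)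
  set q := Real.sqrt (r - ξ * (t * η))
  -- with `U = s²`, `V = q²` the identity becomes rational in `s`, `q`
  rw [← hs2, ← hq2]
  rcases m with _ | m
  · field_simp
    ring
  · simp only [Nat.add_sub_cancel, pow_succ]
    field_simp
    ring

theorem hasDerivAt_Thetaf (hr : r ≠ 0) (hL : lamf r t η ξ ≠ 0) :
    HasDerivAt (fun t => Thetaf r t η ξ) (derivThetaf r t η ξ) t := by
  have hL' := hasDerivAt_lamf r t η ξ
  have h := (((hL'.pow 2).add_const (r ^ 2)).sub ((hasDerivAt_pow 2 t).mul_const (η ^ 2))).div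
    (hL'.const_mul (2 * r)) (by positivity)
  refine h.congr_deriv ?_
  simp only [derivThetaf, Pi.pow_apply, Pi.sub_apply]
  field_simp
  simp only [lamf]
  ring

end Derivatives

theorem hasDerivAt_Kf_mul_mul_chebT (m : ℕ) (k : ℤ) {r t η ξ : ℝ} {w : ℝ → ℝ}
    (hw : DifferentiableAt ℝ w (lamf r t η ξ)) (hr : r ≠ 0) (hL : lamf r t η ξ ≠ 0)
    (hU : 0 < r + t * η - t * η * ξ) (hV : 0 < r - ξ * (t * η)) :
    HasDerivAt (fun t => Kf m r t η ξ * w (lamf r t η ξ) * chebT k (Thetaf r t η ξ))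
      (Kf m r t η ξ *
        (w (lamf r t η ξ) * (logDerivKf m r t η ξ * chebT k (Thetaf r t η ξ))
          + deriv w (lamf r t η ξ) * (η * (1 - 2 * ξ) * chebT k (Thetaf r t η ξ))
          + w (lamf r t η ξ) * (chebT' k (Thetaf r t η ξ) * derivThetaf r t η ξ))) t := by
  have h := ((hasDerivAt_Kf r t η ξ m hL hU hV).mul
    (hw.hasDerivAt.comp t (hasDerivAt_lamf r t η ξ))).mul
    ((hasDerivAt_Thetaf r t η ξ hr hL).chebT k)
  exact h.congr_deriv (by simp only [Function.comp_apply, Pi.mul_apply]; ring)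

section Bounds

variable {r t η ξ : ℝ}

theorem abs_lamf_sub_le (ht : 0 ≤ t) (hη : η ∈ Icc (0 : ℝ) 1) (hξ : ξ ∈ Icc (0 : ℝ) 1) :
    |lamf r t η ξ - r| ≤ t := by
  obtain ⟨hη0, hη1⟩ := hη
  obtain ⟨hξ0, hξ1⟩ := hξ
  rw [abs_le, lamf]
  constructor <;> nlinarith [mul_nonneg ht hη0, mul_nonneg (mul_nonneg ht hη0) hξ0,
    mul_nonneg (mul_nonneg ht hη0) (sub_nonneg.2 hξ1), mul_nonneg ht (sub_nonneg.2 hη1)]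

theorem le_add_mul_sub_mul (ht : 0 ≤ t) (hη : 0 ≤ η) (hξ : ξ ≤ 1) :
    r ≤ r + t * η - t * η * ξ := by
  nlinarith [mul_nonneg (mul_nonneg ht hη) (sub_nonneg.2 hξ)]

theorem sub_le_sub_mul (ht : 0 ≤ t) (hη : η ∈ Icc (0 : ℝ) 1) (hξ : ξ ∈ Icc (0 : ℝ) 1) :
    r - t ≤ r - ξ * (t * η) := by
  nlinarith [mul_nonneg (mul_nonneg ht hξ.1) (sub_nonneg.2 hη.2), mul_nonneg ht (sub_nonneg.2 hξ.2)]

theorem Thetaf_eq_one_sub (hr : r ≠ 0) (hL : lamf r t η ξ ≠ 0) :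
    Thetaf r t η ξ = 1 - 2 * (t * η) ^ 2 * (ξ * (1 - ξ)) / (r * lamf r t η ξ) := by
  rw [Thetaf]
  field_simp
  simp only [lamf]
  ring

theorem Thetaf_le_one (hr : 0 < r) (hL : 0 < lamf r t η ξ) (hξ : ξ ∈ Icc (0 : ℝ) 1) :
    Thetaf r t η ξ ≤ 1 := by
  have := mul_nonneg hξ.1 (sub_nonneg.2 hξ.2)
  rw [Thetaf_eq_one_sub hr.ne' hL.ne', sub_le_self_iff]
  positivity

theorem one_div_one_add_le_Thetaf {ζ : ℝ} (hζ1 : ζ ≤ 1) (hr : 0 < r) (ht : 0 ≤ t) (htr : t ≤ r)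
    (hL : 0 < lamf r t η ξ) (h2t : 2 * t ≤ ζ * lamf r t η ξ) (hη : η ∈ Icc (0 : ℝ) 1)
    (hξ : ξ ∈ Icc (0 : ℝ) 1) :
    1 / (1 + ζ) ≤ Thetaf r t η ξ := by
  obtain ⟨hη0, hη1⟩ := hη
  obtain ⟨hξ0, hξ1⟩ := hξ
  have hζ0 : 0 ≤ ζ := by nlinarith
  have hc : (t * η) ^ 2 * (ξ * (1 - ξ)) ≤ t ^ 2 / 4 := by
    nlinarith [mul_le_mul_of_nonneg_right (pow_le_one₀ hη0 hη1 : η ^ 2 ≤ 1)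
      (mul_nonneg hξ0 (sub_nonneg.2 hξ1)), sq_nonneg (1 - 2 * ξ), sq_nonneg t]
  have ht2 : (1 + ζ) * t ^ 2 ≤ 2 * ζ * (r * lamf r t η ξ) := by
    nlinarith [mul_le_mul htr h2t (by linarith) hr.le]
  have key : 2 * (t * η) ^ 2 * (ξ * (1 - ξ)) / (r * lamf r t η ξ) ≤ ζ / (1 + ζ) := by
    rw [div_le_div_iff₀ (by positivity) (by linarith)]
    nlinarith [mul_le_mul_of_nonneg_left hc (by linarith : (0 : ℝ) ≤ 1 + ζ)]
  have h1 : 1 / (1 + ζ) = 1 - ζ / (1 + ζ) := by field_simp; ring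
  rw [Thetaf_eq_one_sub hr.ne' hL.ne', h1]
  linarith

theorem neg_div_lamf_le_logDerivKf_mul (m : ℕ) (hm : 1 ≤ m) (hr : 0 < r) (ht : 0 ≤ t)
    (h3t : 3 * t ≤ r) (hη : η ∈ Icc (0 : ℝ) 1) (hξ : ξ ∈ Icc (0 : ℝ) 1) {T : ℝ}
    (hT0 : 0 ≤ T) (hT1 : T ≤ 1) :
    -(m / lamf r t η ξ) ≤ logDerivKf m r t η ξ * T := by
  have hL := abs_le.1 (abs_lamf_sub_le (r := r) ht hη hξ)
  have hU := le_add_mul_sub_mul (r := r) ht hη.1 hξ.2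
  have hV := sub_le_sub_mul (r := r) ht hη hξ
  obtain ⟨hη0, hη1⟩ := hη
  obtain ⟨hξ0, hξ1⟩ := hξ
  rw [logDerivKf]
  set L := lamf r t η ξ
  set U := r + t * η - t * η * ξ
  set V := r - ξ * (t * η)
  have hm' : (1 : ℝ) ≤ m := by exact_mod_cast hm
  have hL0 : 0 < L := by linarith
  have hU0 : 0 < U := by linarith
  have hV0 : 0 < V := by linarith
  set c := m / L - r / (2 * (U * V))
  have key : m * (η * (1 - 2 * ξ)) / L - η * (1 - ξ) / (2 * U) + ξ * η / (2 * V)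
      = η * (1 - 2 * ξ) * c + t * η ^ 2 * ξ * (1 - ξ) / (U * V) := by
    simp only [c]
    field_simp
    simp only [U, V]
    ring
  have hc0 : 0 ≤ c := by
    rw [sub_nonneg, div_le_div_iff₀ (by positivity) hL0]
    nlinarith [mul_le_mul hU hV (by linarith) hU0.le, mul_le_mul_of_nonneg_left hL.2 hr.le,
      mul_nonneg (sub_nonneg.2 hm') (mul_pos hU0 hV0).le]
  have hc : c ≤ m / L := sub_le_self _ (by positivity)
  have hpos : 0 ≤ t * η ^ 2 * ξ * (1 - ξ) / (U * V) := by
    have := sub_nonneg.2 hξ1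
    positivity
  rw [key]
  nlinarith [mul_nonneg hpos hT0, mul_le_mul_of_nonneg_left hT1 hc0,
    mul_nonneg (mul_nonneg hc0 hT0) (by nlinarith : 0 ≤ 1 + η * (1 - 2 * ξ))]

theorem neg_div_lamf_le_derivThetaf {ζ : ℝ} (ht : 0 ≤ t) (htr : t ≤ r)
    (hL : 0 < lamf r t η ξ) (h2t : 2 * t ≤ ζ * lamf r t η ξ) (hη : η ∈ Icc (0 : ℝ) 1)
    (hξ : ξ ∈ Icc (0 : ℝ) 1) :
    -(ζ / lamf r t η ξ) ≤ derivThetaf r t η ξ := by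
  have hLr := (abs_le.1 (abs_lamf_sub_le (r := r) ht hη hξ)).2
  obtain ⟨hη0, hη1⟩ := hη
  obtain ⟨hξ0, hξ1⟩ := hξ
  rw [derivThetaf]
  set L := lamf r t η ξ
  have hr : 0 < r := by linarith
  have hx0 : 0 ≤ η ^ 2 * ξ * (1 - ξ) * (L + r) := by
    have := sub_nonneg.2 hξ1
    positivity
  have hx : η ^ 2 * ξ * (1 - ξ) * (L + r) ≤ r := by
    have h4 : η ^ 2 * ξ * (1 - ξ) ≤ 1 / 4 := by
      nlinarith [mul_le_mul_of_nonneg_right (pow_le_one₀ hη0 hη1 : η ^ 2 ≤ 1)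
        (mul_nonneg hξ0 (sub_nonneg.2 hξ1)), sq_nonneg (1 - 2 * ξ)]
    nlinarith [mul_le_mul h4 (by linarith : L + r ≤ 3 * r) (by linarith) (by norm_num)]
  have key : 2 * t * η ^ 2 * ξ * (1 - ξ) * (L + r) / (r * L ^ 2) ≤ ζ / L := by
    rw [div_le_div_iff₀ (by positivity) hL]
    nlinarith [mul_le_mul h2t hx hx0 (by nlinarith)]
  linarith [neg_div (r * L ^ 2) (2 * t * η ^ 2 * ξ * (1 - ξ) * (L + r))]

end Bounds

theorem neg_abs_le_mul_of_abs_le_one {a b : ℝ} (hb : |b| ≤ 1) : -|a| ≤ a * b := by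
  have h := neg_abs_le (a * b)
  rw [abs_mul] at h
  nlinarith [abs_nonneg a]

theorem neg_le_deriv_div_Kf (m : ℕ) (hm : 1 ≤ m) {ζ r t η ξ : ℝ} (hr : 0 < r) (ht : 0 ≤ t)
    (h3t : 3 * t ≤ r) (h2t : 2 * t ≤ ζ * lamf r t η ξ) (hη : η ∈ Icc (0 : ℝ) 1)
    (hξ : ξ ∈ Icc (0 : ℝ) 1) {a b T T' : ℝ} (ha : 0 < a) (hT0 : 0 ≤ T) (hT1 : T ≤ 1)
    (hT'0 : 0 ≤ T') (hT'1 : T' ≤ ((m : ℝ) - 1) ^ 2) :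
    -(((m : ℝ) + 1 / 8 + 5 * ζ * ((m : ℝ) - 1) ^ 2 / 3) * a / lamf r t η ξ + |b|) ≤
      a * (logDerivKf m r t η ξ * T) + b * (η * (1 - 2 * ξ) * T)
        + a * (T' * derivThetaf r t η ξ) := by
  have hL : 0 < lamf r t η ξ := by linarith [(abs_le.1 (abs_lamf_sub_le (r := r) ht hη hξ)).1]
  have hA := neg_div_lamf_le_logDerivKf_mul m hm hr ht h3t hη hξ hT0 hT1
  have hΘ' := neg_div_lamf_le_derivThetaf ht (by linarith) hL h2t hη hξ
  have hb : -|b| ≤ b * (η * (1 - 2 * ξ) * T) := by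
    refine neg_abs_le_mul_of_abs_le_one ?_
    have h : |η * (1 - 2 * ξ)| ≤ 1 := abs_le.2 ⟨by nlinarith [hη.1, hη.2, hξ.1, hξ.2],
      by nlinarith [hη.1, hη.2, hξ.1, hξ.2]⟩
    rw [abs_mul]
    exact mul_le_one₀ h (abs_nonneg _) (abs_le.2 ⟨by linarith, hT1⟩)
  set L := lamf r t η ξ
  have hζL : 0 ≤ ζ / L := div_nonneg (nonneg_of_mul_nonneg_left (by linarith) hL) hL.le
  have hTΘ : -(((m : ℝ) - 1) ^ 2 * (ζ / L)) ≤ T' * derivThetaf r t η ξ := by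
    nlinarith [mul_le_mul_of_nonneg_left hΘ' hT'0, mul_le_mul_of_nonneg_right hT'1 hζL]
  have hrest : 0 ≤ (1 / 8 / L + 2 * ((m : ℝ) - 1) ^ 2 * (ζ / L) / 3) * a := by positivity
  have hsplit : ((m : ℝ) + 1 / 8 + 5 * ζ * ((m : ℝ) - 1) ^ 2 / 3) * a / L
      = a * (m / L) + a * (((m : ℝ) - 1) ^ 2 * (ζ / L))
        + (1 / 8 / L + 2 * ((m : ℝ) - 1) ^ 2 * (ζ / L) / 3) * a := by
    field_simp
    ring
  rw [hsplit]
  linarith [mul_le_mul_of_nonneg_left hA ha.le, mul_le_mul_of_nonneg_left hTΘ ha.le]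

theorem stmt_16_general (m : ℕ) (hm : 2 ≤ m)
    (ζ : ℝ) (hζ0 : 0 < ζ) (hζ1 : ζ ≤ 1)
    (hT : ∀ z : ℝ, 1 / (1 + ζ) ≤ z → z ≤ 1 →
      1 / 2 ≤ chebT ((m : ℤ) - 1) z ∧ chebT ((m : ℤ) - 1) z ≤ 1 ∧
      0 < chebT' ((m : ℤ) - 1) z ∧ chebT' ((m : ℤ) - 1) z ≤ ((m : ℝ) - 1) ^ 2)
    (Em : ℝ) (hEm : Em = (m : ℝ) + 1 / 8 + 5 * ζ * ((m : ℝ) - 1) ^ 2 / 3)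
    (R : ℝ)
    (w : ℝ → ℝ) (hw : ContDiffOn ℝ 1 w (Ioi (0 : ℝ)))
    (hwpos : ∀ y : ℝ, R ≤ y → 0 < w y)
    (r t : ℝ) (hr : 0 < r) (ht : 0 < t) (hrt : max R ((2 / ζ) * t) ≤ r - t)
    (ξ η : ℝ) (hξ : ξ ∈ Icc (0 : ℝ) 1) (hη : η ∈ Icc (0 : ℝ) 1) :
    -((Em * w (lamf r t η ξ) / lamf r t η ξ + |deriv w (lamf r t η ξ)|) * Kf m r t η ξ)
      ≤ deriv (fun t' : ℝ =>
          Kf m r t' η ξ * w (lamf r t' η ξ) * chebT ((m : ℤ) - 1) (Thetaf r t' η ξ)) t := by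
  obtain ⟨hRrt, h2t⟩ := max_le_iff.1 hrt
  rw [div_mul_eq_mul_div, div_le_iff₀ hζ0] at h2t
  have h3t : 3 * t ≤ r := by nlinarith
  obtain ⟨hLlo, -⟩ := abs_le.1 (abs_lamf_sub_le (r := r) ht.le hη hξ)
  have hL : 0 < lamf r t η ξ := by linarith
  have h2tL : 2 * t ≤ ζ * lamf r t η ξ := by nlinarith
  have hU : 0 < r + t * η - t * η * ξ := by linarith [le_add_mul_sub_mul (r := r) ht.le hη.1 hξ.2]
  have hV : 0 < r - ξ * (t * η) := by linarith [sub_le_sub_mul (r := r) ht.le hη hξ]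
  have hK : 0 < Kf m r t η ξ := by
    unfold Kf; positivity
  have hdw : DifferentiableAt ℝ w (lamf r t η ξ) :=
    (hw.differentiableOn one_ne_zero).differentiableAt (Ioi_mem_nhds hL)
  obtain ⟨hT1, hT2, hT'0, hT'1⟩ := hT _
    (one_div_one_add_le_Thetaf hζ1 hr ht.le (by linarith) hL h2tL hη hξ) (Thetaf_le_one hr hL hξ)
  rw [(hasDerivAt_Kf_mul_mul_chebT m _ hdw hr.ne' hL.ne' hU hV).deriv, ← neg_mul, mul_comm, hEm]
  exact mul_le_mul_of_nonneg_left (neg_le_deriv_div_Kf m (by omega) hr ht.le h3t h2tL hη hξ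
    (hwpos _ (by linarith)) (by linarith) hT2 hT'0.le hT'1) hK.le

/-- the pointwise lower bound on the `t`-derivative of the kernel
`K·w(λ)·T_{m-1}(Θ̃)` in even dimensions. -/
theorem stmt_16 (m : ℕ) (hm : 2 ≤ m)
    (ζ : ℝ) (hζ0 : 0 < ζ) (hζ1 : ζ ≤ 1)
    (hT : ∀ z : ℝ, 1 / (1 + ζ) ≤ z → z ≤ 1 →
      1 / 2 ≤ chebT ((m : ℤ) - 1) z ∧ chebT ((m : ℤ) - 1) z ≤ 1 ∧
      0 < chebT' ((m : ℤ) - 1) z ∧ chebT' ((m : ℤ) - 1) z ≤ ((m : ℝ) - 1) ^ 2)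
    (Em : ℝ) (hEm : Em = (m : ℝ) + 1 / 8 + 5 * ζ * ((m : ℝ) - 1) ^ 2 / 3)
    (R : ℝ) (hR : 0 < R)
    (w : ℝ → ℝ) (hw : ContDiffOn ℝ 1 w (Ioi (0 : ℝ)))
    (hwpos : ∀ y : ℝ, R ≤ y → 0 < w y)
    (r t : ℝ) (hr : 0 < r) (ht : 0 < t) (hrt : max R ((2 / ζ) * t) ≤ r - t)
    (ξ η : ℝ) (hξ : ξ ∈ Icc (0 : ℝ) 1) (hη : η ∈ Icc (0 : ℝ) 1) :
    -((Em * w (lamf r t η ξ) / lamf r t η ξ + |deriv w (lamf r t η ξ)|) * Kf m r t η ξ)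
      ≤ deriv (fun t' : ℝ =>
          Kf m r t' η ξ * w (lamf r t' η ξ) * chebT ((m : ℤ) - 1) (Thetaf r t' η ξ)) t :=
  stmt_16_general m hm ζ hζ0 hζ1 hT Em hEm R w hw hwpos r t hr ht hrt ξ η hξ hη
end
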